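/- Let λ be a symplectic partition of 2n and let ν = λ + s(λ). Then ν is a special symplectic partition of 2n. -/

import Mathlib

open Classical

noncomputable section

/-- A partition: weakly decreasing on indices `j ≥ 1` (parts are `l 1 ≥ l 2 ≥ ...`). -/
def IsPartition (l : ℕ → ℕ) : Prop := ∀ j, 1 ≤ j → l (j + 1) ≤ l j

/-- The parts vanish eventually (finitely many nonzero parts). -/
def EventuallyZero (l : ℕ → ℕ) : Prop := ∃ N, ∀ j, N ≤ j → l j = 0

/-- Multiplicity of `i` as a part of `l`. -/
def mult (l : ℕ → ℕ) (i : ℕ) : ℕ := Nat.card {j : ℕ | 1 ≤ j ∧ l j = i}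

/-- The sum of the parts of `l`. -/
def psum (l : ℕ → ℕ) : ℕ := ∑ᶠ j : ℕ, l (j + 1)

/-- Symplectic: every odd part occurs with even multiplicity. -/
def IsSymplectic (l : ℕ → ℕ) : Prop := ∀ i, Odd i → Even (mult l i)

/-- Orthogonal: every even positive part occurs with even multiplicity. -/
def IsOrthogonal (l : ℕ → ℕ) : Prop := ∀ i, 0 < i → Even i → Even (mult l i)

/-- Special: `l (2j-1)` and `l (2j)` have the same parity for all `j ≥ 1`. -/
def IsSpecial (l : ℕ → ℕ) : Prop := ∀ j, 1 ≤ j → l (2 * j - 1) % 2 = l (2 * j) % 2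

/-- `P^+(λ)`: odd `j` with `λ_j` even and `λ_{j-1} > λ_j` (convention `λ_0 = ∞`). -/
def Pplus (l : ℕ → ℕ) : Set ℕ := {j | Odd j ∧ Even (l j) ∧ (j = 1 ∨ l (j - 1) > l j)}

/-- `P^-(λ)`: even `j ≥ 2` with `λ_j` even and `λ_j > λ_{j+1}`. -/
def Pminus (l : ℕ → ℕ) : Set ℕ := {j | 2 ≤ j ∧ Even j ∧ Even (l j) ∧ l j > l (j + 1)}

/-- `Q^+(λ)`: even `j ≥ 2` with `λ_j` odd and `λ_{j-1} > λ_j`. -/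
def Qplus (l : ℕ → ℕ) : Set ℕ := {j | 2 ≤ j ∧ Even j ∧ Odd (l j) ∧ l (j - 1) > l j}

/-- `Q^-(λ)`: odd `j ≥ 1` with `λ_j` odd and `λ_j > λ_{j+1}`. -/
def Qminus (l : ℕ → ℕ) : Set ℕ := {j | Odd j ∧ Odd (l j) ∧ l j > l (j + 1)}

/-- Orthogonal version of `P^+`: odd `j` with `λ_j` odd and `λ_{j-1} > λ_j` (`λ_0 = ∞`). -/
def PplusO (l : ℕ → ℕ) : Set ℕ := {j | Odd j ∧ Odd (l j) ∧ (j = 1 ∨ l (j - 1) > l j)}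

/-- Orthogonal version of `P^-`: even `j ≥ 2` with `λ_j` odd and `λ_j > λ_{j+1}`. -/
def PminusO (l : ℕ → ℕ) : Set ℕ := {j | 2 ≤ j ∧ Even j ∧ Odd (l j) ∧ l j > l (j + 1)}

/-- The sequence `s(λ)`: `1` on `Q^+`, `-1` on `Q^-`, `0` elsewhere. -/
def sSeq (l : ℕ → ℕ) (j : ℕ) : ℤ :=
  if j ∈ Qplus l then 1 else if j ∈ Qminus l then -1 else 0

/-- The sequence `ζ(λ)`: `1` on `P^+`, `-1` on `P^-`, `0` elsewhere. -/
def zSeq (l : ℕ → ℕ) (j : ℕ) : ℤ :=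
  if j ∈ Pplus l then 1 else if j ∈ Pminus l then -1 else 0

/-- Orthogonal `ζ(λ)`: `1` on `PplusO`, `-1` on `PminusO`, `0` elsewhere. -/
def zSeqO (l : ℕ → ℕ) (j : ℕ) : ℤ :=
  if j ∈ PplusO l then 1 else if j ∈ PminusO l then -1 else 0

/-- `sp(λ) = λ + s(λ)` (termwise, truncated to ℕ). -/
def spPart (l : ℕ → ℕ) (j : ℕ) : ℕ := ((l j : ℤ) + sSeq l j).toNat

/-- Dominance order on partitions. -/
def Dom (l m : ℕ → ℕ) : Prop :=
  ∀ k, ∑ j ∈ Finset.range k, l (j + 1) ≤ ∑ j ∈ Finset.range k, m (j + 1)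

/-- `j_min(i)`: smallest index `j ≥ 1` with `l j = i`. -/
def jminPart (l : ℕ → ℕ) (i : ℕ) : ℕ := sInf {j | 1 ≤ j ∧ l j = i}

/-- `j_max(i)`: largest index `j ≥ 1` with `l j = i`. -/
def jmaxPart (l : ℕ → ℕ) (i : ℕ) : ℕ := sSup {j | 1 ≤ j ∧ l j = i}

/-- `iSeq 1 > iSeq 2 > ... > iSeq t` enumerates the even positive parts of odd
multiplicity of the symplectic partition `l`, completed by a final `0` if their
number is odd (so that `t` is even). -/
def MarkedSeq (l : ℕ → ℕ) (iSeq : ℕ → ℕ) (t : ℕ) : Prop :=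
  Even t ∧
  (∀ h h', 1 ≤ h → h < h' → h' ≤ t → iSeq h' < iSeq h) ∧
  (∀ h, 1 ≤ h → h ≤ t → Even (iSeq h)) ∧
  (∀ h, 1 ≤ h → h ≤ t → iSeq h ≠ 0 → Odd (mult l (iSeq h))) ∧
  (∀ i, 0 < i → Even i → Odd (mult l i) → ∃ h, 1 ≤ h ∧ h ≤ t ∧ iSeq h = i)

/-- Orthogonal analogue: `iSeq` enumerates the odd parts of odd multiplicity. -/
def MarkedSeqO (l : ℕ → ℕ) (iSeq : ℕ → ℕ) (t : ℕ) : Prop :=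
  Even t ∧
  (∀ h h', 1 ≤ h → h < h' → h' ≤ t → iSeq h' < iSeq h) ∧
  (∀ h, 1 ≤ h → h ≤ t → Odd (iSeq h)) ∧
  (∀ h, 1 ≤ h → h ≤ t → Odd (mult l (iSeq h))) ∧
  (∀ i, Odd i → Odd (mult l i) → ∃ h, 1 ≤ h ∧ h ≤ t ∧ iSeq h = i)

/-- `i` lies in the range `[i_{2h}, i_{2h-1}]` for some `h`. -/
def InRange (iSeq : ℕ → ℕ) (t : ℕ) (i : ℕ) : Prop :=
  ∃ h, 1 ≤ h ∧ 2 * h ≤ t ∧ iSeq (2 * h) ≤ i ∧ i ≤ iSeq (2 * h - 1)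

/-- Intervals of a (special symplectic) partition `l`, relative to the marked
sequence `iSeq` of length `t`. -/
def IsItv (l : ℕ → ℕ) (iSeq : ℕ → ℕ) (t : ℕ) (Δ : Set ℕ) : Prop :=
  (∃ h, 1 ≤ h ∧ 2 * h ≤ t ∧
      Δ = {i | (i = 0 ∨ 0 < mult l i) ∧ iSeq (2 * h) ≤ i ∧ i ≤ iSeq (2 * h - 1)}) ∨
  (∃ i, Even i ∧ (i = 0 ∨ 0 < mult l i) ∧ ¬ InRange iSeq t i ∧ Δ = {i})

/-- Intervals of a (special orthogonal, even) partition `l`. -/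
def IsItvO (l : ℕ → ℕ) (iSeq : ℕ → ℕ) (t : ℕ) (Δ : Set ℕ) : Prop :=
  (∃ h, 1 ≤ h ∧ 2 * h ≤ t ∧
      Δ = {i | 0 < mult l i ∧ iSeq (2 * h) ≤ i ∧ i ≤ iSeq (2 * h - 1)}) ∨
  (∃ i, Odd i ∧ 0 < mult l i ∧ ¬ InRange iSeq t i ∧ Δ = {i})

/-- `J(Δ)`: the set of indices `j ≥ 1` whose part lies in `Δ`. -/
def idxSet (l : ℕ → ℕ) (Δ : Set ℕ) : Set ℕ := {j | 1 ≤ j ∧ l j ∈ Δ}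

/-- Good parity at index `j`: `λ_{1,j}` even and `λ_{2,j}` odd. -/
def GoodIdx (l₁ l₂ : ℕ → ℕ) (j : ℕ) : Prop := Even (l₁ j) ∧ Odd (l₂ j)

/-- `J^+`: odd `j` of good parity with a strict decrease at `j-1 → j` for some `d`. -/
def Jplus (l₁ l₂ : ℕ → ℕ) : Set ℕ :=
  {j | Odd j ∧ GoodIdx l₁ l₂ j ∧ (j = 1 ∨ l₁ (j - 1) > l₁ j ∨ l₂ (j - 1) > l₂ j)}

/-- `J^-`: even `j` of good parity with a strict decrease at `j → j+1` for some `d`. -/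
def Jminus (l₁ l₂ : ℕ → ℕ) : Set ℕ :=
  {j | 2 ≤ j ∧ Even j ∧ GoodIdx l₁ l₂ j ∧ (l₁ j > l₁ (j + 1) ∨ l₂ j > l₂ (j + 1))}

/-- The sequence `ξ`: `1` on `J^+`, `-1` on `J^-`, `0` elsewhere. -/
def xiSeq (l₁ l₂ : ℕ → ℕ) (j : ℕ) : ℤ :=
  if j ∈ Jplus l₁ l₂ then 1 else if j ∈ Jminus l₁ l₂ then -1 else 0

/-- The endoscopic induction `λ = λ₁ + λ₂ + ξ` (termwise, truncated to ℕ). -/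
def indPart (l₁ l₂ : ℕ → ℕ) (j : ℕ) : ℕ := ((l₁ j : ℤ) + (l₂ j : ℤ) + xiSeq l₁ l₂ j).toNat

/-!
Since `λ` is antitone, each positive value `i` fills a block of indices `[a, b]`, and `s(λ)` only
acts on the blocks of odd values: it raises `λ_a` when `a` is even and lowers `λ_b` when `b` is
odd. Both changes are local, so `ν` is again a partition, and on every pair `(2j-1, 2j)` either
the two parts are equal and untouched or they differ and both become even, which is speciality.
For `λ` symplectic the block of an odd value has even length, so `a` is even iff `b` is odd: the
`+1` and the `-1` come in pairs inside one block. Hence `ν` still has size `2n`, and each odd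
value loses either none or two of its occurrences.
-/

open Finset

section

variable {l : ℕ → ℕ}

lemma IsPartition.antitoneOn (hpart : IsPartition l) : AntitoneOn l {j | 1 ≤ j} :=
  antitoneOn_nat_Ici_of_succ_le hpart

lemma bddAbove_setOf_eq (hzero : EventuallyZero l) {i : ℕ} (hi : 0 < i) :
    BddAbove {j | 1 ≤ j ∧ l j = i} := by
  obtain ⟨N, hN⟩ := hzero
  refine ⟨N, fun j hj => ?_⟩
  by_contra hNj
  have := hN j (by omega)
  exact hi.ne' (hj.2.symm.trans this)

lemma jminPart_mem {i : ℕ} (hne : ∃ j, 1 ≤ j ∧ l j = i) :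
    1 ≤ jminPart l i ∧ l (jminPart l i) = i :=
  Nat.sInf_mem hne

lemma jmaxPart_mem (hzero : EventuallyZero l) {i : ℕ} (hi : 0 < i)
    (hne : ∃ j, 1 ≤ j ∧ l j = i) : 1 ≤ jmaxPart l i ∧ l (jmaxPart l i) = i :=
  Nat.sSup_mem hne (bddAbove_setOf_eq hzero hi)

lemma mem_block_iff (hpart : IsPartition l) (hzero : EventuallyZero l) {i : ℕ} (hi : 0 < i)
    (hne : ∃ j, 1 ≤ j ∧ l j = i) (k : ℕ) :
    1 ≤ k ∧ l k = i ↔ jminPart l i ≤ k ∧ k ≤ jmaxPart l i := by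
  have hmin := jminPart_mem hne
  have hmax := jmaxPart_mem hzero hi hne
  refine ⟨fun hk => ⟨Nat.sInf_le hk, le_csSup (bddAbove_setOf_eq hzero hi) hk⟩, ?_⟩
  rintro ⟨hminle, hlemax⟩
  have hk : 1 ≤ k := hmin.1.trans hminle
  have := hpart.antitoneOn hmin.1 hk hminle
  have := hpart.antitoneOn hk hmax.1 hlemax
  exact ⟨hk, by omega⟩

lemma mult_eq_jmaxPart_add_one_sub_jminPart (hpart : IsPartition l) (hzero : EventuallyZero l)
    {i : ℕ} (hi : 0 < i) (hne : ∃ j, 1 ≤ j ∧ l j = i) :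
    mult l i = jmaxPart l i + 1 - jminPart l i := by
  rw [mult, Set.ext (mem_block_iff hpart hzero hi hne), Nat.card_coe_set_eq]
  exact Set.ncard_Icc_nat _ _

lemma lt_pred_iff_eq_jminPart (hpart : IsPartition l) (hzero : EventuallyZero l) {j : ℕ}
    (hj : 2 ≤ j) (hpos : 0 < l j) : l j < l (j - 1) ↔ j = jminPart l (l j) := by
  have hblock := mem_block_iff hpart hzero hpos ⟨j, by omega, rfl⟩
  have := hblock j
  have := hblock (j - 1)
  have := hpart.antitoneOn (show 1 ≤ j - 1 by omega) (show 1 ≤ j by omega) (Nat.sub_le j 1)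
  omega

lemma succ_lt_iff_eq_jmaxPart (hpart : IsPartition l) (hzero : EventuallyZero l) {j : ℕ}
    (hj : 1 ≤ j) (hpos : 0 < l j) : l (j + 1) < l j ↔ j = jmaxPart l (l j) := by
  have hblock := mem_block_iff hpart hzero hpos ⟨j, hj, rfl⟩
  have := hblock j
  have := hblock (j + 1)
  have := hpart j hj
  omega

lemma mem_Qplus_iff {j : ℕ} :
    j ∈ Qplus l ↔ 2 ≤ j ∧ j % 2 = 0 ∧ l j % 2 = 1 ∧ l j < l (j - 1) := by
  simp only [Qplus, Set.mem_ofPred_eq, Nat.even_iff, Nat.odd_iff, gt_iff_lt]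

lemma mem_Qminus_iff {j : ℕ} :
    j ∈ Qminus l ↔ j % 2 = 1 ∧ l j % 2 = 1 ∧ l (j + 1) < l j := by
  simp only [Qminus, Set.mem_ofPred_eq, Nat.odd_iff, gt_iff_lt]

lemma sSeq_eq_sub (l : ℕ → ℕ) (j : ℕ) :
    sSeq l j = (if j ∈ Qplus l then 1 else 0) - (if j ∈ Qminus l then 1 else 0) := by
  simp only [sSeq, mem_Qplus_iff, mem_Qminus_iff]
  split_ifs <;> omega

lemma sSeq_cases (l : ℕ → ℕ) (j : ℕ) :
    (sSeq l j = 1 ∧ j ∈ Qplus l) ∨ (sSeq l j = -1 ∧ j ∈ Qminus l) ∨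
      (sSeq l j = 0 ∧ j ∉ Qplus l ∧ j ∉ Qminus l) := by
  unfold sSeq
  split_ifs <;> simp_all

lemma natCast_add_sSeq_nonneg (l : ℕ → ℕ) (j : ℕ) : 0 ≤ (l j : ℤ) + sSeq l j := by
  have := sSeq_cases l j
  simp only [mem_Qplus_iff, mem_Qminus_iff] at this
  omega

lemma natCast_spPart (l : ℕ → ℕ) (j : ℕ) : (spPart l j : ℤ) = l j + sSeq l j :=
  Int.toNat_of_nonneg (natCast_add_sSeq_nonneg l j)

lemma spPart_eq_zero {j : ℕ} (h : l j = 0) : spPart l j = 0 := by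
  have hs := sSeq_cases l j
  have hsp := natCast_spPart l j
  simp only [mem_Qplus_iff, mem_Qminus_iff] at hs
  omega

lemma sSeq_zero (l : ℕ → ℕ) : sSeq l 0 = 0 := by
  have := sSeq_cases l 0
  simp only [mem_Qplus_iff, mem_Qminus_iff] at this
  omega

/-- A `+1` of `s` at `j + 1` meets a `-1` at `j` only when `λ_j > λ_{j+1}` are both odd, hence
differ by at least `2`. -/
lemma isPartition_spPart (hpart : IsPartition l) : IsPartition (spPart l) := by
  intro j hj
  have hle := hpart j hj
  have hs := sSeq_cases l j
  have hs' := sSeq_cases l (j + 1)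
  have hsp := natCast_spPart l j
  have hsp' := natCast_spPart l (j + 1)
  simp only [mem_Qplus_iff, mem_Qminus_iff, Nat.add_sub_cancel] at hs hs'
  omega

lemma eventuallyZero_spPart (hzero : EventuallyZero l) : EventuallyZero (spPart l) := by
  obtain ⟨N, hN⟩ := hzero
  exact ⟨N, fun j hj => spPart_eq_zero (hN j hj)⟩

lemma isSpecial_spPart (hpart : IsPartition l) : IsSpecial (spPart l) := by
  rintro (_ | m) hm
  · omega
  have hodd : 2 * (m + 1) - 1 = 2 * m + 1 := by omega
  have heven : 2 * (m + 1) = 2 * m + 1 + 1 := by ring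
  rw [hodd, heven]
  have hle := hpart (2 * m + 1) (by omega)
  have hs := sSeq_cases l (2 * m + 1)
  have hs' := sSeq_cases l (2 * m + 1 + 1)
  have hsp := natCast_spPart l (2 * m + 1)
  have hsp' := natCast_spPart l (2 * m + 1 + 1)
  simp only [mem_Qplus_iff, mem_Qminus_iff, Nat.add_sub_cancel] at hs hs'
  omega

lemma mem_Qplus_iff_eq_jminPart (hpart : IsPartition l) (hzero : EventuallyZero l) {i k : ℕ}
    (hi : Odd i) (hk : 1 ≤ k) (hki : l k = i) :
    k ∈ Qplus l ↔ k = jminPart l i ∧ k % 2 = 0 := by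
  have hi' := Nat.odd_iff.mp hi
  have hstart := fun h : 2 ≤ k => lt_pred_iff_eq_jminPart hpart hzero h (by omega)
  rw [hki] at hstart
  rw [mem_Qplus_iff]
  omega

lemma mem_Qminus_iff_eq_jmaxPart (hpart : IsPartition l) (hzero : EventuallyZero l) {i k : ℕ}
    (hi : Odd i) (hk : 1 ≤ k) (hki : l k = i) :
    k ∈ Qminus l ↔ k = jmaxPart l i ∧ k % 2 = 1 := by
  have hi' := Nat.odd_iff.mp hi
  have hend := succ_lt_iff_eq_jmaxPart hpart hzero hk (by omega)
  rw [hki] at hend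
  rw [mem_Qminus_iff]
  omega

lemma jminPart_mem_Qplus_iff_jmaxPart_mem_Qminus (hpart : IsPartition l)
    (hzero : EventuallyZero l) (hsymp : IsSymplectic l) {i : ℕ} (hi : Odd i)
    (hne : ∃ j, 1 ≤ j ∧ l j = i) :
    jminPart l i ∈ Qplus l ↔ jmaxPart l i ∈ Qminus l := by
  have hpos : 0 < i := hi.pos
  have hmin := jminPart_mem hne
  have hmax := jmaxPart_mem hzero hpos hne
  have hlen := hsymp i hi
  rw [mult_eq_jmaxPart_add_one_sub_jminPart hpart hzero hpos hne, Nat.even_iff] at hlen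
  obtain ⟨j, hj⟩ := hne
  have := (mem_block_iff hpart hzero hpos ⟨j, hj⟩ j).1 hj
  rw [mem_Qplus_iff_eq_jminPart hpart hzero hi hmin.1 hmin.2,
    mem_Qminus_iff_eq_jmaxPart hpart hzero hi hmax.1 hmax.2]
  omega

lemma jmaxPart_mem_Qminus_of_mem_Qplus (hpart : IsPartition l) (hzero : EventuallyZero l)
    (hsymp : IsSymplectic l) {j : ℕ} (h : j ∈ Qplus l) :
    jmaxPart l (l j) ∈ Qminus l ∧ jminPart l (l (jmaxPart l (l j))) = j := by
  have hj := mem_Qplus_iff.1 h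
  have hi : Odd (l j) := Nat.odd_iff.2 hj.2.2.1
  have hne : ∃ k, 1 ≤ k ∧ l k = l j := ⟨j, by omega, rfl⟩
  have hstart := ((mem_Qplus_iff_eq_jminPart hpart hzero hi (by omega) rfl).1 h).1
  rw [(jmaxPart_mem hzero hi.pos hne).2]
  exact ⟨(jminPart_mem_Qplus_iff_jmaxPart_mem_Qminus hpart hzero hsymp hi hne).1 (hstart ▸ h),
    hstart.symm⟩

lemma jminPart_mem_Qplus_of_mem_Qminus (hpart : IsPartition l) (hzero : EventuallyZero l)
    (hsymp : IsSymplectic l) {j : ℕ} (h : j ∈ Qminus l) :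
    jminPart l (l j) ∈ Qplus l ∧ jmaxPart l (l (jminPart l (l j))) = j := by
  have hj := mem_Qminus_iff.1 h
  have hi : Odd (l j) := Nat.odd_iff.2 hj.2.1
  have hne : ∃ k, 1 ≤ k ∧ l k = l j := ⟨j, by omega, rfl⟩
  have hend := ((mem_Qminus_iff_eq_jmaxPart hpart hzero hi (by omega) rfl).1 h).1
  rw [(jminPart_mem hne).2]
  exact ⟨(jminPart_mem_Qplus_iff_jmaxPart_mem_Qminus hpart hzero hsymp hi hne).2 (hend ▸ h),
    hend.symm⟩

lemma lt_of_odd_part {N : ℕ} (hN : ∀ j, N ≤ j → l j = 0) {j : ℕ} (h : Odd (l j)) :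
    j < N := by
  by_contra hjN
  rw [hN j (not_lt.1 hjN)] at h
  exact Nat.not_odd_zero h

lemma card_filter_Qplus_eq_card_filter_Qminus (hpart : IsPartition l)
    (hzero : EventuallyZero l) (hsymp : IsSymplectic l) {N : ℕ}
    (hN : ∀ j, N ≤ j → l j = 0) :
    #{j ∈ range N | j ∈ Qplus l} = #{j ∈ range N | j ∈ Qminus l} := by
  refine card_nbij' (fun j => jmaxPart l (l j)) (fun j => jminPart l (l j)) ?_ ?_ ?_ ?_
  · intro j hj
    simp only [coe_filter, mem_range, Set.mem_ofPred_eq] at hj ⊢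
    have hmax := (jmaxPart_mem_Qminus_of_mem_Qplus hpart hzero hsymp hj.2).1
    exact ⟨lt_of_odd_part hN hmax.2.1, hmax⟩
  · intro j hj
    simp only [coe_filter, mem_range, Set.mem_ofPred_eq] at hj ⊢
    have hmin := (jminPart_mem_Qplus_of_mem_Qminus hpart hzero hsymp hj.2).1
    exact ⟨lt_of_odd_part hN hmin.2.2.1, hmin⟩
  · intro j hj
    exact (jmaxPart_mem_Qminus_of_mem_Qplus hpart hzero hsymp (mem_filter.1 hj).2).2
  · intro j hj
    exact (jminPart_mem_Qplus_of_mem_Qminus hpart hzero hsymp (mem_filter.1 hj).2).2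

lemma sum_range_sSeq_eq_zero (hpart : IsPartition l) (hzero : EventuallyZero l)
    (hsymp : IsSymplectic l) {N : ℕ} (hN : ∀ j, N ≤ j → l j = 0) :
    ∑ j ∈ range N, sSeq l j = 0 := by
  simp only [sSeq_eq_sub, sum_sub_distrib, sum_boole,
    card_filter_Qplus_eq_card_filter_Qminus hpart hzero hsymp hN, sub_self]

lemma psum_eq_sum_range {N : ℕ} (hN : ∀ j, N ≤ j → l j = 0) :
    psum l = ∑ j ∈ range N, l (j + 1) := by
  refine finsum_eq_sum_of_support_subset _ fun j hj => ?_
  by_contra hjN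
  exact hj (hN (j + 1) (by rw [coe_range, Set.mem_Iio, not_lt] at hjN; omega))

lemma psum_spPart (hpart : IsPartition l) (hzero : EventuallyZero l) (hsymp : IsSymplectic l) :
    psum (spPart l) = psum l := by
  obtain ⟨N, hN⟩ := hzero
  have hsum := sum_range_sSeq_eq_zero hpart ⟨N, hN⟩ hsymp (N := N + 1) fun j hj =>
    hN j (by omega)
  rw [sum_range_succ', sSeq_zero, add_zero] at hsum
  rw [psum_eq_sum_range fun j hj => spPart_eq_zero (hN j hj), psum_eq_sum_range hN]
  zify
  simp only [natCast_spPart, sum_add_distrib, hsum, add_zero]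

lemma spPart_eq_iff_of_odd {i k : ℕ} (hi : Odd i) :
    spPart l k = i ↔ l k = i ∧ k ∉ Qplus l ∧ k ∉ Qminus l := by
  have hi' := Nat.odd_iff.1 hi
  have hs := sSeq_cases l k
  have hsp := natCast_spPart l k
  simp only [mem_Qplus_iff, mem_Qminus_iff] at hs ⊢
  omega

lemma one_le_and_spPart_eq_iff (hpart : IsPartition l) (hzero : EventuallyZero l) {i : ℕ}
    (hi : Odd i) (hne : ∃ j, 1 ≤ j ∧ l j = i) (k : ℕ) :
    1 ≤ k ∧ spPart l k = i ↔ (jminPart l i ≤ k ∧ k ≤ jmaxPart l i) ∧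
      ¬(k = jminPart l i ∧ k % 2 = 0) ∧ ¬(k = jmaxPart l i ∧ k % 2 = 1) := by
  rw [← mem_block_iff hpart hzero hi.pos hne k]
  by_cases hk : 1 ≤ k ∧ l k = i
  · rw [spPart_eq_iff_of_odd hi, mem_Qplus_iff_eq_jminPart hpart hzero hi hk.1 hk.2,
      mem_Qminus_iff_eq_jmaxPart hpart hzero hi hk.1 hk.2]
    tauto
  · rw [spPart_eq_iff_of_odd hi]
    tauto

lemma isSymplectic_spPart (hpart : IsPartition l) (hzero : EventuallyZero l)
    (hsymp : IsSymplectic l) : IsSymplectic (spPart l) := by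
  intro i hi
  by_cases hne : ∃ j, 1 ≤ j ∧ l j = i
  swap
  · have hempty : {k | 1 ≤ k ∧ spPart l k = i} = ∅ :=
      Set.eq_empty_of_forall_notMem fun k hk =>
        hne ⟨k, hk.1, ((spPart_eq_iff_of_odd hi).1 hk.2).1⟩
    rw [mult, hempty, Nat.card_of_isEmpty]
    exact Even.zero
  have hlen := hsymp i hi
  rw [mult_eq_jmaxPart_add_one_sub_jminPart hpart hzero hi.pos hne, Nat.even_iff] at hlen
  obtain ⟨j, hj⟩ := hne
  have hj' := (mem_block_iff hpart hzero hi.pos ⟨j, hj⟩ j).1 hj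
  -- both ends of the block drop out exactly when it starts at an even index
  have hset : {k | 1 ≤ k ∧ spPart l k = i} = Set.Icc
      (jminPart l i + (jminPart l i + 1) % 2) (jmaxPart l i - (jminPart l i + 1) % 2) := by
    ext k
    have := one_le_and_spPart_eq_iff hpart hzero hi ⟨j, hj⟩ k
    simp only [Set.mem_ofPred_eq, Set.mem_Icc]
    omega
  rw [mult, hset, Nat.card_coe_set_eq, Set.ncard_Icc_nat, Nat.even_iff]
  omega

end

/-- `ν = λ + s(λ)` is a special symplectic partition of `2n`. -/
theorem lambda_add_s_special_symplectic (n : ℕ) (l : ℕ → ℕ) (hpart : IsPartition l)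
    (hzero : EventuallyZero l) (hsum : psum l = 2 * n) (hsymp : IsSymplectic l) :
    (∀ j, 1 ≤ j → 0 ≤ (l j : ℤ) + sSeq l j) ∧
    IsPartition (spPart l) ∧ EventuallyZero (spPart l) ∧
    psum (spPart l) = 2 * n ∧ IsSymplectic (spPart l) ∧ IsSpecial (spPart l) :=
  ⟨fun j _ => natCast_add_sSeq_nonneg l j, isPartition_spPart hpart, eventuallyZero_spPart hzero,
    (psum_spPart hpart hzero hsymp).trans hsum, isSymplectic_spPart hpart hzero hsymp,
    isSpecial_spPart hpart⟩
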